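/- arXiv:1407.7507 — 2 statements merged into one kernel-verified Lean document; each statement's English description precedes it below -/
import Mathlib

section
/- Every finite join-distributive lattice admits an SB-labeling; in particular, the labeling assigning to each covering pair (x, y) the unique new element of the corresponding feasible set (via the antimatroid representation) is an SB-labeling. -/
/-!
Instead of the element that a cover adds in the antimatroid representation, a cover `x ⋖ y` is
labelled intrinsically by the largest `z` with `z ⊓ y = x`, which exists because
meet-semidistributivity makes this set closed under joins. For `p ⋖ p₁, p₂`, upper semimodularity
makes `p₁ ⊔ p₂` cover `p₁` and `p₂`, and meet-semidistributivity excludes a third atom of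
`[p, p₁ ⊔ p₂]`, so the saturated chains are `p ⋖ pᵢ ⋖ p₁ ⊔ p₂`. The label of `p₁ ⋖ p₁ ⊔ p₂` equals
that of its perspective cover `p ⋖ p₂`, and the two labels at `p` differ since `p₂ ≤ λ(p, p₁)`
whereas `λ(p, p₂) ⊓ p₂ = p`.
-/

variable {α : Type*}

/-- A saturated chain from `x` to `y`: a list starting at `x`, ending at `y`, each
consecutive pair a covering pair. -/
def IsSatChain [PartialOrder α] (c : List α) (x y : α) : Prop :=
  c.head? = some x ∧ c.getLast? = some y ∧ List.Chain' (· ⋖ ·) c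

/-- The list of labels used by a chain `c` under the edge-labeling `lam`. -/
def chainLabels {Λ : Type*} (lam : α → α → Λ) (c : List α) : List Λ :=
  (c.zip c.tail).map fun p => lam p.1 p.2

/-- An SB-labeling of a lattice: an edge-labeling `lam` of covering pairs such that for all
`p ⋖ p₁, p₂` with `p₁ ≠ p₂`: the two labels differ, every saturated chain from `p` to
`p₁ ⊔ p₂` uses both labels, and uses no other label. -/
def IsSBLabeling [Lattice α] {Λ : Type*} (lam : α → α → Λ) : Prop :=
  ∀ p p₁ p₂ : α, p ⋖ p₁ → p ⋖ p₂ → p₁ ≠ p₂ →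
    lam p p₁ ≠ lam p p₂ ∧
    ∀ c : List α, IsSatChain c p (p₁ ⊔ p₂) →
      lam p p₁ ∈ chainLabels lam c ∧ lam p p₂ ∈ chainLabels lam c ∧
      ∀ l ∈ chainLabels lam c, l = lam p p₁ ∨ l = lam p p₂

theorem List.IsChain.le_of_covBy_of_getLast? [Preorder α] {c : List α} {b s : α}
    (hc : c.IsChain (· ⋖ ·)) (hs : c.getLast? = some s) (hb : b ∈ c) : b ≤ s := by
  obtain ⟨l, rfl⟩ := List.getLast?_eq_some_iff.1 hs
  have hlt : (l ++ [s]).Pairwise (· < ·) :=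
    List.isChain_iff_pairwise.1 (hc.imp fun _ _ h => h.lt)
  rcases List.mem_append.1 hb with hb | hb
  · exact ((List.pairwise_append.1 hlt).2.2 b hb s (List.mem_singleton_self s)).le
  · exact (List.mem_singleton.1 hb).le

theorem IsSatChain.eq_triple [PartialOrder α] {c : List α} {p s : α} (hc : IsSatChain c p s)
    (hps : p < s) (hcov : ∀ x, p ⋖ x → x ≤ s → x ⋖ s) :
    ∃ x, p ⋖ x ∧ x ⋖ s ∧ c = [p, x, s] := by
  obtain ⟨hhead, hlast, hchain⟩ :
      c.head? = some p ∧ c.getLast? = some s ∧ c.IsChain (· ⋖ ·) := hc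
  have hle : ∀ b ∈ c, b ≤ s := fun b hb => hchain.le_of_covBy_of_getLast? hlast hb
  rcases c with _ | ⟨a, _ | ⟨x, t⟩⟩
  · simp at hhead
  · simp only [List.head?_cons, List.getLast?_singleton, Option.some.injEq] at hhead hlast
    exact absurd (hhead.symm.trans hlast) hps.ne
  obtain rfl : p = a := (Option.some.inj hhead).symm
  have hpx : p ⋖ x := (List.isChain_cons_cons.1 hchain).1
  have hxs : x ⋖ s := hcov x hpx (hle x (by simp))
  rcases t with _ | ⟨w, _ | ⟨v, t⟩⟩
  · simp only [List.getLast?_cons_cons, List.getLast?_singleton, Option.some.injEq] at hlast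
    exact absurd hlast hxs.ne
  · simp only [List.getLast?_cons_cons, List.getLast?_singleton, Option.some.injEq] at hlast
    exact ⟨x, hpx, hxs, by rw [hlast]⟩
  · exfalso
    obtain ⟨-, hxw, hwv, -⟩ : p ⋖ x ∧ x ⋖ w ∧ w ⋖ v ∧ _ := by
      simpa only [List.isChain_cons_cons] using hchain
    have hws : w = s := (hxs.eq_or_eq hxw.le (hle w (by simp))).resolve_left hxw.ne'
    exact (hws ▸ hwv).lt.not_ge (hle v (by simp))

theorem IsSBLabeling.comp_injective [Lattice α] {Λ Λ' : Type*} {lam : α → α → Λ}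
    (h : IsSBLabeling lam) {f : Λ → Λ'} (hf : Function.Injective f) :
    IsSBLabeling fun x y => f (lam x y) := by
  intro p p₁ p₂ h₁ h₂ hne
  obtain ⟨hlab, hchain⟩ := h p p₁ p₂ h₁ h₂ hne
  refine ⟨hf.ne hlab, fun c hc => ?_⟩
  have hmap : chainLabels (fun x y => f (lam x y)) c = (chainLabels lam c).map f := by
    simp only [chainLabels, List.map_map, Function.comp_def]
  obtain ⟨hmem₁, hmem₂, honly⟩ := hchain c hc
  rw [hmap]
  refine ⟨List.mem_map_of_mem hmem₁, List.mem_map_of_mem hmem₂, ?_⟩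
  intro _ hl'
  obtain ⟨l, hl, rfl⟩ := List.mem_map.1 hl'
  exact (honly l hl).imp (congrArg f) (congrArg f)

def MeetSemidistrib (α : Type*) [Lattice α] : Prop :=
  ∀ p q r : α, p ⊓ q = p ⊓ r → p ⊓ q = p ⊓ (q ⊔ r)

section Lattice

variable [Lattice α]

theorem MeetSemidistrib.eq_or_eq_of_covBy {p p₁ p₂ x : α} (hmsd : MeetSemidistrib α)
    (h₁ : p ⋖ p₁) (h₂ : p ⋖ p₂) (hx : p ⋖ x) (hxs : x ≤ p₁ ⊔ p₂) : x = p₁ ∨ x = p₂ := by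
  by_contra! hne
  have hinf₁ : x ⊓ p₁ = p := hx.wcovBy.inf_eq h₁.wcovBy hne.1
  have hinf₂ : x ⊓ p₂ = p := hx.wcovBy.inf_eq h₂.wcovBy hne.2
  have := hmsd x p₁ p₂ (hinf₁.trans hinf₂.symm)
  rw [hinf₁, inf_eq_left.2 hxs] at this
  exact hx.ne this

open scoped Classical in
noncomputable def coverLabel [Fintype α] (x y : α) : α :=
  if h : (Finset.univ.filter fun z => z ⊓ y = x).Nonempty then
    (Finset.univ.filter fun z => z ⊓ y = x).sup' h id
  else x

variable [Fintype α] {x y : α}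

open scoped Classical in
theorem le_coverLabel {z : α} (hz : z ⊓ y = x) : z ≤ coverLabel x y := by
  have hmem : z ∈ Finset.univ.filter fun z => z ⊓ y = x := by simpa using hz
  rw [coverLabel, dif_pos ⟨z, hmem⟩]
  exact Finset.le_sup' id hmem

open scoped Classical in
theorem MeetSemidistrib.coverLabel_inf (hmsd : MeetSemidistrib α) (h : x ≤ y) :
    coverLabel x y ⊓ y = x := by
  have hne : (Finset.univ.filter fun z => z ⊓ y = x).Nonempty := ⟨x, by simpa using h⟩
  rw [coverLabel, dif_pos hne]
  refine Finset.sup'_induction hne id (p := fun z => z ⊓ y = x) (fun a ha b hb => ?_)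
    (fun b hb => by simpa using hb)
  have := hmsd y a b (by rw [inf_comm y a, inf_comm y b, ha, hb])
  rw [inf_comm y a, ha] at this
  show (a ⊔ b) ⊓ y = x
  rw [inf_comm, ← this]

theorem MeetSemidistrib.not_le_coverLabel (hmsd : MeetSemidistrib α) (h : x < y) :
    ¬y ≤ coverLabel x y := fun hle =>
  h.ne ((hmsd.coverLabel_inf h.le).symm.trans (inf_eq_right.2 hle))

theorem MeetSemidistrib.coverLabel_ne {p p₁ p₂ : α} (hmsd : MeetSemidistrib α)
    (h₁ : p ⋖ p₁) (h₂ : p ⋖ p₂) (hne : p₁ ≠ p₂) : coverLabel p p₁ ≠ coverLabel p p₂ := by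
  intro heq
  apply hmsd.not_le_coverLabel h₂.lt
  rw [← heq]
  exact le_coverLabel (h₂.wcovBy.inf_eq h₁.wcovBy hne.symm)

theorem MeetSemidistrib.coverLabel_sup {a b : α} (hmsd : MeetSemidistrib α) (h : a ⋖ a ⊔ b) :
    coverLabel a (a ⊔ b) = coverLabel (a ⊓ b) b := by
  have hab : a ⊓ b < b := inf_le_right.lt_of_ne fun heq =>
    h.ne (sup_eq_left.2 (inf_eq_right.1 heq)).symm
  apply le_antisymm
  · apply le_coverLabel
    calc coverLabel a (a ⊔ b) ⊓ b = coverLabel a (a ⊔ b) ⊓ (a ⊔ b) ⊓ b := by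
          rw [inf_assoc, inf_eq_right.2 (le_sup_right : b ≤ a ⊔ b)]
      _ = a ⊓ b := by rw [hmsd.coverLabel_inf le_sup_left]
  · apply le_coverLabel
    have ha : a ≤ coverLabel (a ⊓ b) b ⊓ (a ⊔ b) := le_inf (le_coverLabel rfl) le_sup_left
    refine (h.eq_or_eq ha inf_le_right).resolve_right fun htop => ?_
    exact hmsd.not_le_coverLabel hab (le_sup_right.trans (htop ▸ inf_le_left))

theorem MeetSemidistrib.isSBLabeling_coverLabel (hmsd : MeetSemidistrib α)
    (husm : ∀ p q : α, p ⊓ q ⋖ p → p ⊓ q ⋖ q → p ⋖ p ⊔ q ∧ q ⋖ p ⊔ q) :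
    IsSBLabeling (coverLabel : α → α → α) := by
  intro p p₁ p₂ h₁ h₂ hne
  have hinf : p₁ ⊓ p₂ = p := h₁.wcovBy.inf_eq h₂.wcovBy hne
  obtain ⟨hc₁, hc₂⟩ := husm p₁ p₂ (hinf ▸ h₁) (hinf ▸ h₂)
  have hlab₁ : coverLabel p₁ (p₁ ⊔ p₂) = coverLabel p p₂ := hinf ▸ hmsd.coverLabel_sup hc₁
  have hlab₂ : coverLabel p₂ (p₁ ⊔ p₂) = coverLabel p p₁ := by
    rw [sup_comm] at hc₂ ⊢
    rw [hmsd.coverLabel_sup hc₂, inf_comm, hinf]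
  have hatoms : ∀ x, p ⋖ x → x ≤ p₁ ⊔ p₂ → x = p₁ ∨ x = p₂ :=
    fun x hx => hmsd.eq_or_eq_of_covBy h₁ h₂ hx
  refine ⟨hmsd.coverLabel_ne h₁ h₂ hne, fun c hc => ?_⟩
  have hps : p < p₁ ⊔ p₂ := h₁.lt.trans_le le_sup_left
  obtain ⟨x, hpx, hxs, rfl⟩ := hc.eq_triple hps fun x hx hxs => by
    rcases hatoms x hx hxs with rfl | rfl
    exacts [hc₁, sup_comm p₁ x ▸ hc₂]
  rcases hatoms x hpx hxs.le with rfl | rfl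
  · simp [chainLabels, hlab₁]
  · simp [chainLabels, hlab₂]

end Lattice

/-- Every finite join-distributive lattice (meet-semidistributive and upper semimodular)
admits an SB-labeling. -/
theorem stmt10 [Lattice α] [Fintype α]
    (hmsd : ∀ p q r : α, p ⊓ q = p ⊓ r → p ⊓ q = p ⊓ (q ⊔ r))
    (husm : ∀ p q : α, (p ⊓ q) ⋖ p → (p ⊓ q) ⋖ q → (p ⋖ (p ⊔ q) ∧ q ⋖ (p ⊔ q))) :
    ∃ (Λ : Type) (lam : α → α → Λ), IsSBLabeling lam :=
  ⟨Fin (Fintype.card α), _,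
    (MeetSemidistrib.isSBLabeling_coverLabel hmsd husm).comp_injective
      (Fintype.equivFin α).injective⟩
end

section
/- Let W be a Coxeter group with Coxeter element γ, let W' be a standard parabolic subgroup generated by J ⊆ S, and let γ' be the restriction of γ to W' (the subword of γ consisting of letters in J). Then the set of γ'-sortable elements of W' is an order ideal of the poset of γ-sortable elements of W under Bruhat order: if w is γ-sortable, w' is γ'-sortable, and w ≤_B w', then w ∈ W' and w is γ'-sortable. -/
/-! Sortable elements of a Coxeter group, following Reading.
We fix a rank `n` and a Coxeter system `cs` over the index type `Fin n`; the fixed reduced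
word for the Coxeter element `γ` is `s 0 * s 1 * ⋯ * s (n-1)`.  Position `i` (0-based) of
the half-infinite word `γ^∞ = s 0 ⋯ s (n-1) | s 0 ⋯ s (n-1) | ⋯` carries the letter
`i % n`. -/

variable {n : ℕ} [NeZero n] {W : Type*} [Group W] {M : CoxeterMatrix (Fin n)}

/-- The letter at position `i` of `γ^∞`. -/
def gammaLetter (n : ℕ) [NeZero n] (i : ℕ) : Fin n :=
  ⟨i % n, Nat.mod_lt i (Nat.pos_of_ne_zero (NeZero.ne n))⟩

/-- The subword of `γ^∞` with (finite) set of positions `A`. -/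
def subwordOf (n : ℕ) [NeZero n] (A : Finset ℕ) : List (Fin n) :=
  (A.sort (· ≤ ·)).map (gammaLetter n)

/-- `A` is the set of filled positions `α_γ(w)` of the `γ`-sorting word of `w`: the subword
of `γ^∞` at positions `A` is a reduced word for `w`, and it is lexicographically first among
all subwords of `γ^∞` that are reduced words for `w`. -/
def IsSortingPositions (cs : CoxeterSystem M W) (w : W) (A : Finset ℕ) : Prop :=
  cs.IsReduced (subwordOf n A) ∧ cs.wordProd (subwordOf n A) = w ∧
    ∀ A' : Finset ℕ, cs.IsReduced (subwordOf n A') → cs.wordProd (subwordOf n A') = w →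
      ¬ List.Lex (· < ·) (A'.sort (· ≤ ·)) (A.sort (· ≤ ·))

/-- The blocks of the positions `A` are weakly decreasing, i.e. a letter filled in some
block is also filled in the preceding block. -/
def BlocksDecreasing (n : ℕ) (A : Finset ℕ) : Prop :=
  ∀ p : ℕ, p + n ∈ A → p ∈ A

/-- `w` is `γ`-sortable: the blocks of its `γ`-sorting word are weakly decreasing. -/
def Sortable (cs : CoxeterSystem M W) (w : W) : Prop :=
  ∃ A : Finset ℕ, IsSortingPositions cs w A ∧ BlocksDecreasing n A

/-- Bruhat order: `u ≤_B v` iff some reduced word for `v` has a subword whose product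
is `u`. -/
def Bruhat (cs : CoxeterSystem M W) (u v : W) : Prop :=
  ∃ l : List (Fin n), cs.IsReduced l ∧ cs.wordProd l = v ∧
    ∃ l' : List (Fin n), l'.Sublist l ∧ cs.wordProd l' = u

/-- `w` is `γ'`-sortable for the restriction `γ'` of `γ` to the standard parabolic
subgroup generated by `J`: it is `γ`-sortable with a sorting word using only letters
in `J`. -/
def SortableIn (cs : CoxeterSystem M W) (J : Set (Fin n)) (w : W) : Prop :=
  ∃ A : Finset ℕ, IsSortingPositions cs w A ∧ BlocksDecreasing n A ∧
    ∀ p ∈ A, gammaLetter n p ∈ J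

/-!
Every reduced word of an element of the standard parabolic subgroup `W_J` uses only letters
of `J`: if `s_i w < w`, the exchange property applied to a reduced `J`-word for `w` shows that
`s_i w` and hence `s_i` lie in `W_J`, and `s_i ∈ W_J` forces `i ∈ J` because the simple
reflections are pairwise distinct. Now `w ≤_B w'` makes `w` a product of a subword of a reduced
word for `w' ∈ W_J`, so `w ∈ W_J`, and the `γ`-sorting word of `w`, being reduced, uses only
letters of `J`.

The exchange property is proved with the parity representation of Björner–Brenti (§1.4) on
`W × ZMod 2`, and distinctness of the simple reflections with the geometric representation.
-/

open Real
open scoped Matrix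

theorem pow_succ_eq_of_sq_eq_two_cos_smul_sub_one {A : Type*} [Ring A] [Algebra ℝ A] {x : A}
    {θ : ℝ} (hθ : sin θ ≠ 0) (hx : x ^ 2 = (2 * cos θ) • x - 1) (k : ℕ) :
    x ^ (k + 1) = (sin ((k + 1) * θ) / sin θ) • x - (sin (k * θ) / sin θ) • 1 := by
  induction k with
  | zero => simp [div_self hθ]
  | succ k ih =>
    have hsin : sin ((k + 1 + 1) * θ) = 2 * cos θ * sin ((k + 1) * θ) - sin (k * θ) := by
      have h₁ : (k + 1 + 1) * θ = (k + 1) * θ + θ := by ring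
      have h₂ : k * θ = (k + 1) * θ - θ := by ring
      rw [h₁, h₂, sin_add, sin_sub]
      ring
    rw [pow_succ, ih, sub_mul, smul_mul_assoc, ← sq, hx, smul_mul_assoc, one_mul]
    push_cast
    rw [hsin]
    match_scalars <;> field_simp

theorem pow_eq_one_of_sq_eq_two_cos_smul_sub_one {A : Type*} [Ring A] [Algebra ℝ A] {x : A}
    {m : ℕ} (hm : 3 ≤ m) (hx : x ^ 2 = (2 * cos (2 * π / m)) • x - 1) : x ^ m = 1 := by
  have hsin : sin (2 * π / m) ≠ 0 := by
    refine (sin_pos_of_pos_of_lt_pi (by positivity) ?_).ne'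
    rw [div_lt_iff₀ (by positivity)]
    have : (3 : ℝ) ≤ m := by exact_mod_cast hm
    nlinarith [pi_pos]
  obtain ⟨k, rfl⟩ : ∃ k, m = k + 1 := ⟨m - 1, by omega⟩
  rw [pow_succ_eq_of_sq_eq_two_cos_smul_sub_one hsin hx]
  have h₁ : ((k : ℝ) + 1) * (2 * π / ↑(k + 1)) = 2 * π := by push_cast; field_simp
  have h₂ : (k : ℝ) * (2 * π / ↑(k + 1)) = 2 * π - 2 * π / ↑(k + 1) := by
    push_cast; field_simp; ring
  rw [h₁, h₂, sin_two_pi, sin_two_pi_sub, neg_div, div_self hsin]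
  simp

namespace CoxeterMatrix

variable {B : Type*} (M : CoxeterMatrix B)

/-- The bilinear form of the geometric representation on simple roots; `M a b = 0` encodes
`m_ab = ∞`. -/
noncomputable def cosForm (a b : B) : ℝ :=
  if M a b = 0 then -1 else -cos (π / M a b)

noncomputable def rootForm (a : B) : (B →₀ ℝ) →ₗ[ℝ] ℝ :=
  Finsupp.linearCombination ℝ (M.cosForm a)

noncomputable def geomReflection (a : B) : Module.End ℝ (B →₀ ℝ) :=
  LinearMap.id - (2 • M.rootForm a).smulRight (Finsupp.single a 1)

variable {M}

theorem cosForm_self (a : B) : M.cosForm a a = 1 := by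
  simp [cosForm]

theorem cosForm_comm (a b : B) : M.cosForm a b = M.cosForm b a := by
  rw [cosForm, cosForm, M.symmetric]

theorem rootForm_single (a b : B) : M.rootForm a (Finsupp.single b 1) = M.cosForm a b := by
  simp [rootForm]

theorem geomReflection_apply (a : B) (v : B →₀ ℝ) :
    M.geomReflection a v = v - (2 * M.rootForm a v) • Finsupp.single a 1 := by
  simp [geomReflection]

theorem geomReflection_mul_self (a : B) : M.geomReflection a * M.geomReflection a = 1 := by
  refine LinearMap.ext fun v => ?_
  simp only [Module.End.mul_apply, geomReflection_apply, map_sub, map_smul, rootForm_single,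
    cosForm_self, Module.End.one_apply]
  module

/-- The matrix of `geomReflection a * geomReflection b` on the plane spanned by the two simple
roots, in the basis of the roots, when `cosForm a b = -c`. -/
def planeRotation (c : ℝ) : Matrix (Fin 2) (Fin 2) ℝ := !![4 * c ^ 2 - 1, -2 * c; 2 * c, -1]

theorem planeRotation_pow_eq_one {m : ℕ} (hm : 2 ≤ m) :
    planeRotation (cos (π / m)) ^ m = 1 := by
  rcases hm.eq_or_lt with rfl | hm
  · ext i j
    fin_cases i <;> fin_cases j <;> simp [planeRotation, sq, Matrix.mul_apply, Fin.sum_univ_two]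
  refine pow_eq_one_of_sq_eq_two_cos_smul_sub_one hm ?_
  have hcos : 2 * cos (2 * π / m) = 4 * cos (π / m) ^ 2 - 2 := by
    rw [mul_div_assoc, cos_two_mul]; ring
  rw [hcos]
  ext i j
  fin_cases i <;> fin_cases j <;>
    simp [planeRotation, sq, Matrix.mul_apply, Fin.sum_univ_two] <;> ring

theorem geomReflection_mul_apply_plane {a b : B} {c : ℝ} (hc : M.cosForm a b = -c)
    {r : B →₀ ℝ} (ha : M.rootForm a r = 0) (hb : M.rootForm b r = 0) (u : Fin 2 → ℝ) :
    (M.geomReflection a * M.geomReflection b)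
        (u 0 • Finsupp.single a 1 + u 1 • Finsupp.single b 1 + r) =
      (planeRotation c *ᵥ u) 0 • Finsupp.single a 1
        + (planeRotation c *ᵥ u) 1 • Finsupp.single b 1 + r := by
  have hc' : M.cosForm b a = -c := by rw [cosForm_comm, hc]
  simp only [Module.End.mul_apply, geomReflection_apply, map_add, map_sub, map_smul,
    rootForm_single, cosForm_self, hc, hc', ha, hb]
  have hD : planeRotation c *ᵥ u = ![(4 * c ^ 2 - 1) * u 0 - 2 * c * u 1, 2 * c * u 0 - u 1] := by
    ext i
    fin_cases i <;> simp [planeRotation, Matrix.mulVec, dotProduct, Fin.sum_univ_two] <;> ring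
  rw [hD, Matrix.cons_val_zero, Matrix.cons_val_one, Matrix.cons_val_zero]
  module

theorem geomReflection_mul_pow_apply_plane {a b : B} {c : ℝ} (hc : M.cosForm a b = -c)
    {r : B →₀ ℝ} (ha : M.rootForm a r = 0) (hb : M.rootForm b r = 0) (k : ℕ)
    (u : Fin 2 → ℝ) :
    ((M.geomReflection a * M.geomReflection b) ^ k)
        (u 0 • Finsupp.single a 1 + u 1 • Finsupp.single b 1 + r) =
      (planeRotation c ^ k *ᵥ u) 0 • Finsupp.single a 1
        + (planeRotation c ^ k *ᵥ u) 1 • Finsupp.single b 1 + r := by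
  induction k with
  | zero => simp
  | succ k ih =>
    rw [pow_succ', Module.End.mul_apply, ih, geomReflection_mul_apply_plane hc ha hb,
      Matrix.mulVec_mulVec, ← pow_succ']

theorem exists_eq_plane_add_orthogonal {a b : B} {c : ℝ} (hc : M.cosForm a b = -c)
    (hc1 : c ^ 2 ≠ 1) (v : B →₀ ℝ) :
    ∃ (u : Fin 2 → ℝ) (r : B →₀ ℝ), M.rootForm a r = 0 ∧ M.rootForm b r = 0 ∧
      v = u 0 • Finsupp.single a 1 + u 1 • Finsupp.single b 1 + r := by
  have hc' : M.cosForm b a = -c := by rw [cosForm_comm, hc]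
  have hd : 1 - c ^ 2 ≠ 0 := sub_ne_zero.2 (Ne.symm hc1)
  set α := M.rootForm a v
  set β := M.rootForm b v
  let u : Fin 2 → ℝ := ![(α + c * β) / (1 - c ^ 2), (β + c * α) / (1 - c ^ 2)]
  refine ⟨u, v - u 0 • Finsupp.single a 1 - u 1 • Finsupp.single b 1, ?_, ?_, by abel⟩ <;>
  · simp only [map_sub, map_smul, rootForm_single, cosForm_self, hc, hc', smul_eq_mul, u,
      Matrix.cons_val_zero, Matrix.cons_val_one]
    field_simp
    ring

theorem isLiftable_geomReflection : M.IsLiftable M.geomReflection := by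
  intro a b
  rcases eq_or_ne a b with rfl | hab
  · simp [geomReflection_mul_self]
  rcases eq_or_ne (M a b) 0 with h0 | h0
  · rw [h0, pow_zero]
  have hm : 2 ≤ M a b := by have := M.off_diagonal a b hab; omega
  have hc : M.cosForm a b = -cos (π / M a b) := by simp [cosForm, h0]
  have hc1 : cos (π / M a b) ^ 2 ≠ 1 := by
    have hpos : 0 < sin (π / M a b) := by
      refine sin_pos_of_pos_of_lt_pi (by positivity) ?_
      exact div_lt_self pi_pos (by exact_mod_cast hm)
    nlinarith [sin_sq_add_cos_sq (π / M a b)]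
  refine LinearMap.ext fun v => ?_
  -- split `v` into the plane of the two roots and a part fixed by both reflections
  obtain ⟨u, r, ha, hb, rfl⟩ := exists_eq_plane_add_orthogonal hc hc1 v
  rw [geomReflection_mul_pow_apply_plane hc ha hb, planeRotation_pow_eq_one hm,
    Matrix.one_mulVec, Module.End.one_apply]

end CoxeterMatrix

theorem conj_eq_iff_eq_conj {g t u : W} : g * t * g⁻¹ = u ↔ t = g⁻¹ * u * g := by
  constructor <;> rintro rfl <;> group

namespace CoxeterSystem

variable {B : Type*} {M : CoxeterMatrix B} (cs : CoxeterSystem M W)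

local prefix:100 "s" => cs.simple
local prefix:100 "π" => cs.wordProd
local prefix:100 "ris" => cs.rightInvSeq
local prefix:100 "lis" => cs.leftInvSeq

theorem simple_injective : Function.Injective cs.simple := by
  intro i j hij
  by_contra hne
  have h := congrArg (fun w => cs.lift ⟨M.geomReflection, M.isLiftable_geomReflection⟩ w
    (Finsupp.single i 1) i) hij
  simp only [cs.lift_apply_simple, CoxeterMatrix.geomReflection_apply,
    CoxeterMatrix.rootForm_single, CoxeterMatrix.cosForm_self, Finsupp.sub_apply,
    Finsupp.smul_apply, Finsupp.single_eq_same, Finsupp.single_eq_of_ne hne] at h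
  norm_num at h

open Classical

theorem simple_conj_eq_iff {i : B} {t u : W} : s i * t * s i = u ↔ t = s i * u * s i := by
  simpa only [inv_simple] using conj_eq_iff_eq_conj (g := s i)

noncomputable def parityAction (i : B) : Equiv.Perm (W × ZMod 2) :=
  Function.Involutive.toPerm (fun q => (s i * q.1 * s i, q.2 + if q.1 = s i then 1 else 0))
    fun q => by
      have h : s i * q.1 * s i = s i ↔ q.1 = s i := by
        rw [simple_conj_eq_iff, mul_assoc, simple_mul_simple_self, mul_one]
      ext
      · simp [mul_assoc, cs.simple_mul_simple_cancel_left]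
      · simp only [h, add_assoc, CharTwo.add_self_eq_zero, add_zero]

theorem parityAction_apply (i : B) (t : W) (ε : ZMod 2) :
    cs.parityAction i (t, ε) = (s i * t * s i, ε + if t = s i then 1 else 0) :=
  rfl

theorem parityAction_mul_pow_apply (a b : B) (k : ℕ) (t : W) (ε : ZMod 2) :
    ((cs.parityAction a * cs.parityAction b) ^ k) (t, ε) =
      ((s a * s b) ^ k * t * ((s a * s b) ^ k)⁻¹,
        ε + ∑ l ∈ Finset.range (2 * k), if t = (s b * s a) ^ l * s b then 1 else 0) := by
  induction k generalizing t ε with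
  | zero => simp
  | succ k ih =>
    have hinv : (s a * s b)⁻¹ = s b * s a := by simp [mul_inv_rev]
    have hconj (u : W) : s a * (s b * u * s b) * s a = (s a * s b) * u * (s a * s b)⁻¹ := by
      rw [hinv]; group
    rw [pow_succ, Equiv.Perm.mul_apply, Equiv.Perm.mul_apply, parityAction_apply,
      parityAction_apply, ih, hconj, mul_add, Finset.sum_range_succ', Finset.sum_range_succ']
    congr 1
    · rw [pow_succ, mul_inv_rev]
      group
    · have h₀ : s b * t * s b = s a ↔ t = s b * s a * s b := simple_conj_eq_iff cs
      have h₁ (l : ℕ) : (s a * s b) * t * (s a * s b)⁻¹ = (s b * s a) ^ l * s b ↔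
          t = (s b * s a) ^ (l + 1 + 1) * s b := by
        rw [conj_eq_iff_eq_conj, hinv, pow_succ, pow_succ']
        simp only [mul_assoc]
      simp only [h₀, h₁, zero_add, pow_zero, pow_one, one_mul]
      ring

theorem isLiftable_parityAction : M.IsLiftable cs.parityAction := by
  intro a b
  -- the summand is periodic with period `M a b`, so each value is counted twice
  refine Equiv.ext fun ⟨t, ε⟩ => ?_
  have hperiod (l : ℕ) : (s b * s a) ^ (M a b + l) = (s b * s a) ^ l := by
    rw [pow_add, M.symmetric, simple_mul_simple_pow, one_mul]
  rw [parityAction_mul_pow_apply, simple_mul_simple_pow, two_mul, Finset.sum_range_add]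
  simp [hperiod, CharTwo.add_self_eq_zero]

noncomputable def parityRep : W →* Equiv.Perm (W × ZMod 2) :=
  cs.lift ⟨cs.parityAction, cs.isLiftable_parityAction⟩

theorem parityRep_simple (i : B) : cs.parityRep (s i) = cs.parityAction i :=
  cs.lift_apply_simple _ i

theorem parityRep_wordProd (ω : List B) (t : W) (ε : ZMod 2) :
    cs.parityRep (π ω) (t, ε) = (π ω * t * (π ω)⁻¹, ε + (ris ω).count t) := by
  induction ω generalizing ε with
  | nil => simp
  | cons i ω ih =>
    have hcond : π ω * t * (π ω)⁻¹ = s i ↔ (π ω)⁻¹ * s i * π ω = t := by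
      rw [conj_eq_iff_eq_conj, eq_comm]
    rw [wordProd_cons, map_mul, Equiv.Perm.mul_apply, ih, parityRep_simple, parityAction_apply,
      rightInvSeq, List.count_cons]
    simp only [beq_iff_eq, hcond]
    refine Prod.ext ?_ ?_
    · simp only [mul_inv_rev, inv_simple, mul_assoc]
    · push_cast
      ring

noncomputable def reflParity (w t : W) : ZMod 2 := (cs.parityRep w (t, 0)).2

theorem count_rightInvSeq (ω : List B) (t : W) :
    ((ris ω).count t : ZMod 2) = cs.reflParity (π ω) t := by
  simp [reflParity, parityRep_wordProd]

theorem parityRep_apply (w t : W) (ε : ZMod 2) :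
    cs.parityRep w (t, ε) = (w * t * w⁻¹, ε + cs.reflParity w t) := by
  obtain ⟨ω, rfl⟩ := cs.wordProd_surjective w
  rw [parityRep_wordProd, count_rightInvSeq]

theorem reflParity_one (t : W) : cs.reflParity 1 t = 0 := by
  simp [reflParity]

theorem reflParity_simple_self (i : B) : cs.reflParity (s i) (s i) = 1 := by
  simp [reflParity, parityRep_simple, parityAction_apply]

theorem reflParity_mul (u v t : W) :
    cs.reflParity (u * v) t = cs.reflParity v t + cs.reflParity u (v * t * v⁻¹) := by
  rw [reflParity, map_mul, Equiv.Perm.mul_apply, parityRep_apply, parityRep_apply, zero_add]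

theorem reflParity_self {t : W} (ht : cs.IsReflection t) : cs.reflParity t t = 1 := by
  obtain ⟨v, i, rfl⟩ := ht
  have hcancel := cs.reflParity_mul v v⁻¹ (v * s i * v⁻¹)
  have hconj : v⁻¹ * (v * s i * v⁻¹) * v⁻¹⁻¹ = s i := by group
  rw [mul_inv_cancel, reflParity_one, hconj] at hcancel
  rw [reflParity_mul, hconj, reflParity_mul, reflParity_simple_self, inv_simple,
    simple_mul_simple_cancel_right]
  linear_combination -hcancel

theorem reflParity_mul_self {t : W} (ht : cs.IsReflection t) (w : W) :
    cs.reflParity (w * t) t = cs.reflParity w t + 1 := by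
  rw [reflParity_mul, reflParity_self cs ht, mul_inv_cancel_right, add_comm]

/-- If `t` were missing from `ris ω`, then `reflParity (π ω * t) t = 1`, so `t` would occur in
every word for `π ω * t` and be a right inversion of it. -/
theorem mem_rightInvSeq_of_isRightInversion {ω : List B} {t : W}
    (ht : cs.IsRightInversion (π ω) t) : t ∈ ris ω := by
  by_contra hmem
  obtain ⟨ω', hω', hprod⟩ := cs.exists_isReduced (π ω * t)
  have hmem' : t ∈ ris ω' := by
    by_contra hmem'
    have h := cs.count_rightInvSeq ω' t
    rw [← hprod, reflParity_mul_self cs ht.1, ← count_rightInvSeq,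
      List.count_eq_zero_of_not_mem hmem, List.count_eq_zero_of_not_mem hmem'] at h
    simp at h
  have h := (cs.isRightInversion_of_mem_rightInvSeq hω' hmem').2
  rw [← hprod, mul_assoc, ht.1.mul_self, mul_one] at h
  exact lt_asymm h ht.2

theorem mem_leftInvSeq_of_isLeftInversion {ω : List B} {t : W}
    (ht : cs.IsLeftInversion (π ω) t) : t ∈ lis ω := by
  rw [← isRightInversion_inv_iff, ← wordProd_reverse] at ht
  simpa [rightInvSeq_reverse] using cs.mem_rightInvSeq_of_isRightInversion ht

theorem exists_wordProd_eraseIdx_of_isLeftInversion {ω : List B} {t : W}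
    (ht : cs.IsLeftInversion (π ω) t) : ∃ j < ω.length, t * π ω = π (ω.eraseIdx j) := by
  obtain ⟨j, hj, hjt⟩ := List.mem_iff_getElem.1 (cs.mem_leftInvSeq_of_isLeftInversion ht)
  rw [length_leftInvSeq] at hj
  refine ⟨j, hj, ?_⟩
  rw [← getD_leftInvSeq_mul_wordProd, List.getD_eq_getElem _ _ (by simpa using hj), hjt]

theorem exists_isReduced_sublist (ω : List B) :
    ∃ ω' : List B, ω'.Sublist ω ∧ cs.IsReduced ω' ∧ π ω' = π ω := by
  induction ω with
  | nil => exact ⟨[], .slnil, by simp [IsReduced], rfl⟩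
  | cons i α ih =>
    obtain ⟨α', hsub, hred, hprod⟩ := ih
    rcases cs.length_simple_mul (π α') i with hlong | hshort
    · refine ⟨i :: α', hsub.cons_cons i, ?_, by rw [wordProd_cons, wordProd_cons, hprod]⟩
      rw [IsReduced, wordProd_cons, hlong, hred.eq, List.length_cons]
    · obtain ⟨j, hj, heq⟩ := cs.exists_wordProd_eraseIdx_of_isLeftInversion (ω := α')
        ⟨cs.isReflection_simple i, by omega⟩
      refine ⟨α'.eraseIdx j, ((List.eraseIdx_sublist _ _).trans hsub).cons i, ?_, ?_⟩
      · rw [IsReduced, ← heq, List.length_eraseIdx_of_lt hj, ← hred.eq]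
        omega
      · rw [← heq, wordProd_cons, hprod]

theorem mem_closure_simple_image_iff {J : Set B} {w : W} :
    w ∈ Subgroup.closure (cs.simple '' J) ↔
      ∃ ω : List B, (∀ i ∈ ω, i ∈ J) ∧ π ω = w := by
  constructor
  · intro hw
    induction hw using Subgroup.closure_induction with
    | mem x hx =>
      obtain ⟨i, hi, rfl⟩ := hx
      exact ⟨[i], by simpa using hi, wordProd_singleton cs i⟩
    | one => exact ⟨[], by simp, wordProd_nil cs⟩
    | mul x y _ _ hx hy =>
      obtain ⟨ω, hωJ, rfl⟩ := hx
      obtain ⟨ω', hω'J, rfl⟩ := hy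
      exact ⟨ω ++ ω', fun i hi => (List.mem_append.1 hi).elim (hωJ i) (hω'J i),
        wordProd_append cs ω ω'⟩
    | inv x _ hx =>
      obtain ⟨ω, hωJ, rfl⟩ := hx
      exact ⟨ω.reverse, by simpa using hωJ, wordProd_reverse cs ω⟩
  · rintro ⟨ω, hωJ, rfl⟩
    refine list_prod_mem fun x hx => ?_
    obtain ⟨i, hi, rfl⟩ := List.mem_map.1 hx
    exact Subgroup.subset_closure ⟨i, hωJ i hi, rfl⟩

theorem simple_mem_closure_simple_image_iff {J : Set B} {i : B} :
    s i ∈ Subgroup.closure (cs.simple '' J) ↔ i ∈ J := by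
  refine ⟨fun hi => ?_, fun hi => Subgroup.subset_closure ⟨i, hi, rfl⟩⟩
  obtain ⟨μ, hμJ, hμ⟩ := cs.mem_closure_simple_image_iff.1 hi
  obtain ⟨μ', hsub, hred, hprod⟩ := cs.exists_isReduced_sublist μ
  obtain ⟨j, rfl⟩ : ∃ j, μ' = [j] := by
    rw [← List.length_eq_one_iff, ← hred.eq, hprod, hμ, length_simple]
  rw [wordProd_singleton, hμ] at hprod
  exact cs.simple_injective hprod ▸ hμJ j (hsub.subset (List.mem_singleton_self j))

variable {cs} in
theorem IsReduced.forall_mem_of_wordProd_mem_closure {ω : List B} (hω : cs.IsReduced ω)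
    {J : Set B} (hJ : π ω ∈ Subgroup.closure (cs.simple '' J)) : ∀ i ∈ ω, i ∈ J := by
  induction ω with
  | nil => simp
  | cons i α ih =>
    obtain ⟨κ, hκJ, hκ⟩ := cs.mem_closure_simple_image_iff.1 hJ
    obtain ⟨κ', hsub, hred, hprod⟩ := cs.exists_isReduced_sublist κ
    have hdesc : cs.IsLeftInversion (π κ') (s i) := by
      refine ⟨cs.isReflection_simple i, ?_⟩
      rw [hprod, hκ, hω.eq, wordProd_cons, simple_mul_simple_cancel_left]
      exact (cs.length_wordProd_le α).trans_lt (Nat.lt_succ_self _)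
    obtain ⟨j, -, hj⟩ := cs.exists_wordProd_eraseIdx_of_isLeftInversion hdesc
    rw [hprod, hκ, wordProd_cons, simple_mul_simple_cancel_left] at hj
    have hα : π α ∈ Subgroup.closure (cs.simple '' J) := by
      rw [hj]
      exact cs.mem_closure_simple_image_iff.2
        ⟨_, fun x hx => hκJ x ((List.eraseIdx_sublist _ _).trans hsub |>.subset hx), rfl⟩
    have hi : s i ∈ Subgroup.closure (cs.simple '' J) := by
      have := Subgroup.mul_mem _ hJ (Subgroup.inv_mem _ hα)
      rwa [wordProd_cons, mul_inv_cancel_right] at this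
    exact List.forall_mem_cons.2
      ⟨cs.simple_mem_closure_simple_image_iff.1 hi, ih (hω.drop 1) hα⟩

end CoxeterSystem

/-- The `γ'`-sortable elements of a standard parabolic subgroup `W'` form an order ideal of
`B_γ`: if `w` is `γ`-sortable, `w'` is `γ'`-sortable and `w ≤_B w'`, then `w` lies in `W'`
and is `γ'`-sortable. -/
theorem stmt15 (cs : CoxeterSystem M W) (J : Set (Fin n)) (w w' : W)
    (hw : Sortable cs w) (hw' : SortableIn cs J w') (hle : Bruhat cs w w') :
    w ∈ Subgroup.closure (cs.simple '' J) ∧ SortableIn cs J w := by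
  obtain ⟨A, hA, hblocks⟩ := hw
  obtain ⟨A', ⟨-, hA'w', -⟩, -, hA'J⟩ := hw'
  obtain ⟨l, hl, rfl, l', hl'l, rfl⟩ := hle
  have letters_mem {A : Finset ℕ} (hAJ : ∀ p ∈ A, gammaLetter n p ∈ J) :
      ∀ i ∈ subwordOf n A, i ∈ J := by
    simp only [subwordOf, List.mem_map, Finset.mem_sort]
    rintro _ ⟨p, hp, rfl⟩
    exact hAJ p hp
  have hw' : cs.wordProd l ∈ Subgroup.closure (cs.simple '' J) :=
    hA'w' ▸ cs.mem_closure_simple_image_iff.2 ⟨_, letters_mem hA'J, rfl⟩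
  have hw : cs.wordProd l' ∈ Subgroup.closure (cs.simple '' J) :=
    cs.mem_closure_simple_image_iff.2
      ⟨l', fun i hi => hl.forall_mem_of_wordProd_mem_closure hw' i (hl'l.subset hi), rfl⟩
  refine ⟨hw, A, hA, hblocks, fun p hp => ?_⟩
  exact hA.1.forall_mem_of_wordProd_mem_closure (hA.2.1 ▸ hw) _
    (List.mem_map_of_mem ((Finset.mem_sort _).2 hp))
end
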